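/- arXiv:2501.12998 — 2 statements merged into one kernel-verified Lean document; each statement's English description precedes it below -/
import Mathlib

section
/- With π(x) = xₙ/x₁ on the half-space model of hyperbolic n-space, the function s ↦ α(s) := 1/(1+s²) satisfies g(∇π, ∇π) = 1/(α ∘ π), i.e., the submersion π : (Ȟⁿ, g) → ((0,∞), α(s) ds²) is Riemannian. -/
/-! The Euclidean gradient of `y ↦ yₙ / y₁` is `x₁⁻¹ (eₙ - π(x) e₁)`, of squared length
`(1 + π(x)²) / x₁²`. The hyperbolic gradient is `x₁²` times the Euclidean one and
`g = x₁⁻² ⟨·,·⟩`, so `g(∇π, ∇π) = 1 + π(x)² = 1 / α(π(x))`. -/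

open EuclideanSpace

section CoordinateQuotient

variable {ι : Type*} [Fintype ι] [DecidableEq ι] {i j : ι} {x : EuclideanSpace ℝ ι}

theorem hasGradientAt_apply_div_apply (hx : x i ≠ 0) :
    HasGradientAt (fun y : EuclideanSpace ℝ ι => y j / y i)
      ((x i)⁻¹ • (single j 1 - (x j / x i) • single i 1)) x := by
  rw [hasGradientAt_iff_hasFDerivAt]
  have hinv : HasFDerivAt (fun y : EuclideanSpace ℝ ι => (y i)⁻¹)
      ((-((x i) ^ 2)⁻¹) • proj (𝕜 := ℝ) i) x := by
    simpa [Function.comp_def] using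
      (hasDerivAt_inv hx).comp_hasFDerivAt x (proj (𝕜 := ℝ) i).hasFDerivAt
  simp only [div_eq_mul_inv]
  refine ((proj (𝕜 := ℝ) j).hasFDerivAt.mul hinv).congr_fderiv ?_
  ext v
  simp only [InnerProductSpace.toDual_apply_apply, inner_smul_left, inner_sub_left,
    inner_single_left, add_apply, smul_apply, PiLp.proj_apply, smul_eq_mul, conj_trivial]
  field_simp
  ring

theorem inner_self_single_sub_smul_single (hij : i ≠ j) (c : ℝ) :
    inner ℝ (single j (1 : ℝ) - c • single i 1) (single j 1 - c • single i 1) = 1 + c ^ 2 := by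
  simp only [inner_sub_left, inner_sub_right, inner_smul_left, inner_smul_right,
    inner_single_left, PiLp.single_apply, hij, hij.symm, if_true, if_false, conj_trivial]
  ring

end CoordinateQuotient

theorem stmt11 (n : ℕ) (hn : 2 ≤ n) (x : EuclideanSpace ℝ (Fin n))
    (hx1 : 0 < x ⟨0, by omega⟩)
    (α : ℝ → ℝ) (hα : α = fun s => 1 / (1 + s^2)) :
    let i1 : Fin n := ⟨0, by omega⟩
    let iN : Fin n := ⟨n-1, by omega⟩
    let πf : EuclideanSpace ℝ (Fin n) → ℝ := fun y => y iN / y i1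
    let gradπ : EuclideanSpace ℝ (Fin n) := (x i1)^2 • gradient πf x
    -- g(∇π, ∇π) = 1/(α ∘ π)
    ((x i1)^2)⁻¹ * (inner ℝ gradπ gradπ : ℝ) = 1 / α (πf x) := by
  intro i1 iN πf gradπ
  have hx : x i1 ≠ 0 := hx1.ne'
  have hne : i1 ≠ iN := by simp only [i1, iN, Ne, Fin.mk.injEq]; omega
  have hgrad : gradient πf x = (x i1)⁻¹ • (single iN 1 - (x iN / x i1) • single i1 1) :=
    (hasGradientAt_apply_div_apply hx).gradient
  have hnorm := inner_self_single_sub_smul_single hne (x iN / x i1)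
  simp only [gradπ, hgrad, smul_smul, inner_smul_left, inner_smul_right, hnorm, hα, πf,
    conj_trivial]
  field_simp
end

section
/- Let f : [s₀, s₁) → ℝ be continuous on [s₀,s₁) and differentiable on (s₀,s₁) with 0 < s₀ < s₁ < ∞. Suppose w = f' satisfies w'(s) = q(s,w(s))/p(s) on (s₀,s₁), where p(s) = s³+s and q(s,x) = -s²(s²+1)(n s²+1)x³ + s³(s²+1)x² - ((n+2)s²+2)x + s with n ≥ 2. Then w does not blow up as s → s₁⁻: there is a constant C with |w(s)| ≤ C on [(s₀+s₁)/2, s₁). (Consequently every maximal solution extends to (s₀,∞).) -/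
/-- Barrier lemma: if `g a ≤ C` and `g' ≤ 0` wherever `g ≥ C` on `[a,b)`,
then `g ≤ C` on `[a,b)`. -/
lemma barrier_aux (a b : ℝ) (g g' : ℝ → ℝ)
    (hg : ∀ s ∈ Set.Ico a b, HasDerivAt g (g' s) s)
    (C : ℝ) (hC : g a ≤ C)
    (hsign : ∀ s ∈ Set.Ico a b, C ≤ g s → g' s ≤ 0) :
    ∀ t ∈ Set.Ico a b, g t ≤ C := by
  intro t ht
  by_contra hgt
  push_neg at hgt
  have hat : a < t := by
    rcases lt_or_eq_of_le ht.1 with h | h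
    · exact h
    · exfalso; rw [← h] at hgt; linarith
  have hsub : Set.Icc a t ⊆ Set.Ico a b := fun x hx => ⟨hx.1, lt_of_le_of_lt hx.2 ht.2⟩
  have hcont : ContinuousOn g (Set.Icc a t) := fun x hx =>
    ((hg x (hsub hx)).continuousAt).continuousWithinAt
  set S := Set.Icc a t ∩ g ⁻¹' (Set.Iic C) with hS
  have hSne : S.Nonempty := ⟨a, ⟨le_refl a, le_of_lt hat⟩, hC⟩
  have hScl : IsClosed S :=
    hcont.preimage_isClosed_of_isClosed isClosed_Icc isClosed_Iic
  have hSbdd : BddAbove S := BddAbove.mono Set.inter_subset_left (bddAbove_Icc)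
  set t₀ := sSup S with ht₀
  have ht₀S : t₀ ∈ S := hScl.csSup_mem hSne hSbdd
  have ht₀le : g t₀ ≤ C := ht₀S.2
  have ht₀t : t₀ < t := by
    rcases lt_or_eq_of_le ht₀S.1.2 with h | h
    · exact h
    · exfalso; rw [h] at ht₀le; linarith
  have hgtC : ∀ x ∈ Set.Ioc t₀ t, C < g x := by
    intro x hx
    by_contra hxC
    push_neg at hxC
    have hxS : x ∈ S := ⟨⟨le_trans ht₀S.1.1 (le_of_lt hx.1), hx.2⟩, hxC⟩
    exact absurd (le_csSup hSbdd hxS) (not_le.mpr hx.1)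
  have hIccsub : Set.Icc t₀ t ⊆ Set.Icc a t :=
    Set.Icc_subset_Icc ht₀S.1.1 le_rfl
  have hanti : AntitoneOn g (Set.Icc t₀ t) := by
    apply antitoneOn_of_deriv_nonpos (convex_Icc t₀ t) (hcont.mono hIccsub)
    · intro x hx
      rw [interior_Icc] at hx
      exact ((hg x (hsub (hIccsub ⟨le_of_lt hx.1, le_of_lt hx.2⟩))).differentiableAt).differentiableWithinAt
    · intro x hx
      rw [interior_Icc] at hx
      have hxmem : x ∈ Set.Ico a b := hsub (hIccsub ⟨le_of_lt hx.1, le_of_lt hx.2⟩)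
      rw [(hg x hxmem).deriv]
      exact hsign x hxmem (le_of_lt (hgtC x ⟨hx.1, le_of_lt hx.2⟩))
  have := hanti ⟨le_rfl, le_of_lt ht₀t⟩ ⟨le_of_lt ht₀t, le_rfl⟩ (le_of_lt ht₀t)
  linarith

/-- The cubic `q(s,x)` is nonpositive for large `x`. -/
lemma q_nonpos (n : ℕ) (s₀ s₁ s x : ℝ) (h0 : 0 < s₀) (hs : s₀ ≤ s) (hs1 : s ≤ s₁)
    (hx : (s₁^3*(s₁^2+1)+s₁+1)/s₀^2 + 1 ≤ x) :
    -s^2*(s^2+1)*((n:ℝ)*s^2+1)*x^3 + s^3*(s^2+1)*x^2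
      - (((n:ℝ)+2)*s^2+2)*x + s ≤ 0 := by
  have hs0 : 0 < s := lt_of_lt_of_le h0 hs
  have hs1' : 0 < s₁ := lt_of_lt_of_le hs0 hs1
  have hN : (0:ℝ) < s₁^3*(s₁^2+1)+s₁+1 := by positivity
  have hx1 : (1:ℝ) ≤ x := by
    have : (0:ℝ) ≤ (s₁^3*(s₁^2+1)+s₁+1)/s₀^2 := by positivity
    linarith
  have hxpos : 0 < x := lt_of_lt_of_le one_pos hx1
  have hdiv : s₁^3*(s₁^2+1)+s₁+1 ≤ s₀^2 * (x - 1) := by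
    rw [div_add' _ _ _ (by positivity : (s₀:ℝ)^2 ≠ 0)] at hx
    rw [div_le_iff₀ (by positivity : (0:ℝ) < s₀^2)] at hx
    nlinarith
  have hn0 : (0:ℝ) ≤ (n:ℝ) := Nat.cast_nonneg n
  -- A ≥ s₀²
  have hss : s₀^2 ≤ s^2 := by nlinarith
  have hA : s₀^2 ≤ s^2*(s^2+1)*((n:ℝ)*s^2+1) := by
    nlinarith [hss, mul_nonneg hn0 (sq_nonneg (s^3)), mul_nonneg hn0 (sq_nonneg (s^2)),
      sq_nonneg (s^2)]
  have hAx : s₀^2 * x^3 ≤ s^2*(s^2+1)*((n:ℝ)*s^2+1) * x^3 := by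
    apply mul_le_mul_of_nonneg_right hA (by positivity)
  have hx3 : (s₀^2 + (s₁^3*(s₁^2+1)+s₁+1)) * x^2 ≤ s₀^2 * x^3 := by
    have : s₀^2 + (s₁^3*(s₁^2+1)+s₁+1) ≤ s₀^2 * x := by nlinarith
    nlinarith [sq_nonneg x]
  have hB0 : s^3*(s^2+1) ≤ s₁^3*(s₁^2+1) := by
    have h1 : s^3 ≤ s₁^3 := by gcongr
    have h2 : s^2 + 1 ≤ s₁^2 + 1 := by gcongr
    have h3 : (0:ℝ) ≤ s^3 := by positivity
    nlinarith [pow_pos hs1' 3, sq_nonneg s₁]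
  have hB : s^3*(s^2+1)*x^2 ≤ s₁^3*(s₁^2+1)*x^2 :=
    mul_le_mul_of_nonneg_right hB0 (sq_nonneg x)
  have hL : 0 ≤ (((n:ℝ)+2)*s^2+2)*x := by positivity
  have hx2 : (1:ℝ) ≤ x^2 := by nlinarith
  have hsx : s ≤ s₁ * x^2 := by nlinarith [mul_le_mul_of_nonneg_left hx2 hs1'.le]
  nlinarith [sq_nonneg x, mul_nonneg (sq_nonneg s₀) (sq_nonneg x)]

/-- The cubic `q(s,x)` is nonnegative for `x ≤ 0`. -/
lemma q_nonneg (n : ℕ) (s x : ℝ) (hs0 : 0 < s) (hx : x ≤ 0) :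
    0 ≤ -s^2*(s^2+1)*((n:ℝ)*s^2+1)*x^3 + s^3*(s^2+1)*x^2
      - (((n:ℝ)+2)*s^2+2)*x + s := by
  have hn0 : (0:ℝ) ≤ (n:ℝ) := Nat.cast_nonneg n
  have h1 : 0 ≤ -(x^3) := by nlinarith [mul_nonneg (neg_nonneg.mpr hx) (sq_nonneg x)]
  have h2 : (0:ℝ) ≤ s^2*(s^2+1)*((n:ℝ)*s^2+1) := by positivity
  have h3 : (0:ℝ) ≤ ((n:ℝ)+2)*s^2+2 := by positivity
  nlinarith [mul_nonneg h2 h1, mul_nonneg h3 (neg_nonneg.mpr hx), sq_nonneg x,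
    mul_nonneg (mul_nonneg (pow_nonneg hs0.le 3) (by positivity : (0:ℝ) ≤ s^2+1)) (sq_nonneg x)]

theorem stmt17 (n : ℕ) (hn : 2 ≤ n) (s₀ s₁ : ℝ) (h0 : 0 < s₀) (h1 : s₀ < s₁)
    (f w : ℝ → ℝ)
    (hfc : ContinuousOn f (Set.Ico s₀ s₁))
    (hfd : ∀ s ∈ Set.Ioo s₀ s₁, HasDerivAt f (w s) s)
    (hw : ∀ s ∈ Set.Ioo s₀ s₁, HasDerivAt w
      ((-s^2*(s^2+1)*((n:ℝ)*s^2+1)*(w s)^3 + s^3*(s^2+1)*(w s)^2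
        - (((n:ℝ)+2)*s^2+2)*(w s) + s) / (s^3 + s)) s) :
    ∃ C : ℝ, ∀ s ∈ Set.Ico ((s₀+s₁)/2) s₁, |w s| ≤ C := by
  set a := (s₀+s₁)/2 with ha
  have ha0 : s₀ < a := by simp only [ha]; linarith
  have ha1 : a < s₁ := by simp only [ha]; linarith
  have hapos : 0 < a := lt_trans h0 ha0
  have hsub : Set.Ico a s₁ ⊆ Set.Ioo s₀ s₁ := fun x hx => ⟨lt_of_lt_of_le ha0 hx.1, hx.2⟩
  set M := (s₁^3*(s₁^2+1)+s₁+1)/s₀^2 + 1 with hM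
  set Cu := max M (w a) with hCu
  set Cl := max 0 (-(w a)) with hCl
  -- derivative function
  set w' : ℝ → ℝ := fun s =>
    (-s^2*(s^2+1)*((n:ℝ)*s^2+1)*(w s)^3 + s^3*(s^2+1)*(w s)^2
      - (((n:ℝ)+2)*s^2+2)*(w s) + s) / (s^3 + s) with hw'
  have hwderiv : ∀ s ∈ Set.Ico a s₁, HasDerivAt w (w' s) s := fun s hs => hw s (hsub hs)
  have hppos : ∀ s ∈ Set.Ico a s₁, (0:ℝ) < s^3 + s := by
    intro s hs
    have hs0 : 0 < s := lt_of_lt_of_le hapos hs.1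
    positivity
  -- upper bound
  have hupper : ∀ s ∈ Set.Ico a s₁, w s ≤ Cu := by
    apply barrier_aux a s₁ w w' hwderiv Cu (le_max_right _ _)
    intro s hs hCs
    have hq : -s^2*(s^2+1)*((n:ℝ)*s^2+1)*(w s)^3 + s^3*(s^2+1)*(w s)^2
        - (((n:ℝ)+2)*s^2+2)*(w s) + s ≤ 0 := by
      apply q_nonpos n s₀ s₁ s (w s) h0 (le_of_lt (lt_of_lt_of_le ha0 hs.1)) (le_of_lt hs.2)
      exact le_trans (le_max_left M (w a)) hCs
    exact div_nonpos_of_nonpos_of_nonneg hq (le_of_lt (hppos s hs))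
  -- lower bound via -w
  have hlower : ∀ s ∈ Set.Ico a s₁, -(w s) ≤ Cl := by
    apply barrier_aux a s₁ (fun s => -(w s)) (fun s => -(w' s))
      (fun s hs => (hwderiv s hs).neg) Cl (le_max_right _ _)
    intro s hs hCs
    have hws : w s ≤ 0 := by
      have : (0:ℝ) ≤ -(w s) := le_trans (le_max_left _ _) hCs
      linarith
    have hq : 0 ≤ -s^2*(s^2+1)*((n:ℝ)*s^2+1)*(w s)^3 + s^3*(s^2+1)*(w s)^2
        - (((n:ℝ)+2)*s^2+2)*(w s) + s :=
      q_nonneg n s (w s) (lt_of_lt_of_le hapos hs.1) hws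
    have : 0 ≤ w' s := div_nonneg hq (le_of_lt (hppos s hs))
    linarith
  refine ⟨max Cu Cl, ?_⟩
  intro s hs
  rw [abs_le]
  constructor
  · have := hlower s hs
    have h2 : Cl ≤ max Cu Cl := le_max_right _ _
    linarith
  · exact le_trans (hupper s hs) (le_max_left _ _)
end
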